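/- For the sorted reasoning sequence x(i) = ⌊i/2⌋ (i ∈ ℤ) under maximal UNMASKED information propagation, for every k ≥ 2 and every m ∈ ℤ the value set at even position 2m satisfies Ṽ^k_(2m) ⊆ {m − (3^(k−1)+1)/2, m − (3^(k−1)+1)/2 + 1, …, m + (3^(k−1)−1)/2}; in particular |Ṽ^k_(2m)| ≤ 3^(k−1) + 1. -/
import Mathlib


/-- Value sets of maximal UNMASKED information propagation for the sorted
reasoning sequence `x i = ⌊i / 2⌋` (chain `a_m = (m-1, m)`, identity permutation):
`Ṽ¹_{2m} = {m-1, m}`, `Ṽ¹_{2m-1} = {m-1}`, and for `l ≥ 2` the layer-`l` set at `i`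
is the union of the previous set with all previous-layer sets (at any position,
no mask) that intersect it. -/
def valueSetU : ℕ → ℤ → Set ℤ
  | 0, i => {Int.fdiv i 2}
  | 1, i => if Even i then {i / 2 - 1, i / 2} else {(i - 1) / 2}
  | l + 2, i =>
      valueSetU (l + 1) i ∪
        ⋃ (j : ℤ) (_ : (valueSetU (l + 1) j ∩ valueSetU (l + 1) i).Nonempty),
          valueSetU (l + 1) j

lemma odd_pow3 (l : ℕ) : ∃ t : ℤ, (3 : ℤ) ^ l = 2 * t + 1 := by
  have : Odd ((3 : ℤ) ^ l) := Odd.pow (by decide)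
  obtain ⟨t, ht⟩ := this
  exact ⟨t, by omega⟩

/-- Key induction: layer `l+1` value sets lie in an interval of radius
`(3^l+1)/2` left and `(3^l-1)/2` right around `⌊i/2⌋`. -/
lemma valueSetU_subset (l : ℕ) : ∀ i : ℤ, valueSetU (l + 1) i ⊆
    Set.Icc (i / 2 - ((3 : ℤ) ^ l + 1) / 2) (i / 2 + ((3 : ℤ) ^ l - 1) / 2) := by
  induction l with
  | zero =>
    intro i y hy
    simp only [valueSetU] at hy
    by_cases h : Even i
    · rw [if_pos h] at hy
      simp only [Set.mem_insert_iff, Set.mem_singleton_iff] at hy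
      obtain ⟨n, hn⟩ := h
      simp only [Set.mem_Icc]
      omega
    · rw [if_neg h] at hy
      simp only [Set.mem_singleton_iff] at hy
      rw [Int.not_even_iff_odd] at h
      obtain ⟨n, hn⟩ := h
      simp only [Set.mem_Icc]
      omega
  | succ l ih =>
    intro i y hy
    obtain ⟨t, ht⟩ := odd_pow3 l
    have ht' : (3 : ℤ) ^ (l + 1) = 2 * (3 * t + 1) + 1 := by
      rw [pow_succ]; omega
    simp only [valueSetU, Set.mem_union, Set.mem_iUnion] at hy
    rcases hy with hy | ⟨j, ⟨x, hx1, hx2⟩, hyj⟩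
    · have := ih i hy
      simp only [Set.mem_Icc] at this ⊢
      omega
    · have h1 := ih j hx1
      have h2 := ih i hx2
      have h3 := ih j hyj
      simp only [Set.mem_Icc] at h1 h2 h3 ⊢
      omega

/-- in the unmasked sorted setting, for `k ≥ 2` the value set at even
position `2m` is contained in the integer interval
`[m - (3^(k-1)+1)/2, m + (3^(k-1)-1)/2]`; in particular its cardinality is at most
`3^(k-1) + 1`. -/
theorem unmasked_sorted_upper_bound (k : ℕ) (hk : 2 ≤ k) (m : ℤ) :
    valueSetU k (2 * m) ⊆
        Set.Icc (m - ((3 : ℤ) ^ (k - 1) + 1) / 2) (m + ((3 : ℤ) ^ (k - 1) - 1) / 2) ∧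
      (valueSetU k (2 * m)).ncard ≤ 3 ^ (k - 1) + 1 := by
  obtain ⟨l, rfl⟩ : ∃ l, k = l + 1 := ⟨k - 1, by omega⟩
  have hsub := valueSetU_subset l (2 * m)
  have hdiv : (2 * m) / 2 = m := by omega
  rw [hdiv] at hsub
  simp only [Nat.add_sub_cancel]
  refine ⟨hsub, ?_⟩
  obtain ⟨t, ht⟩ := odd_pow3 l
  calc (valueSetU (l + 1) (2 * m)).ncard
      ≤ (Set.Icc (m - ((3 : ℤ) ^ l + 1) / 2) (m + ((3 : ℤ) ^ l - 1) / 2)).ncard := by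
        exact Set.ncard_le_ncard hsub (by rw [← Finset.coe_Icc]; exact (Finset.Icc _ _).finite_toSet)
    _ ≤ 3 ^ l + 1 := by
        rw [← Finset.coe_Icc, Set.ncard_coe_finset, Int.card_Icc]
        have h3 : (3 : ℤ) ^ l = ((3 ^ l : ℕ) : ℤ) := by push_cast; ring
        have hpos : (0 : ℤ) < 3 ^ l := pow_pos (by norm_num) l
        omega
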